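/- Given a maximum independent set M of G_P and J ∈ M, there exists a unique j such that J \ μ(M,J) = {j}; moreover this j is a maximal element of J with respect to the order ≤_P, and for any two distinct J_r, J_s ∈ M one has J_r \ μ(M,J_r) ≠ J_s \ μ(M,J_s). -/

import Mathlib

attribute [local instance] Classical.propDecidable

noncomputable section

open Finset

variable {n : ℕ}

/-- The comparability graph of the poset structure `P` on `Fin n`; for an order
ideal of `P`, connectivity of its induced subgraph in this graph agrees with
connectivity of the Hasse diagram. -/
def compGraph (P : PartialOrder (Fin n)) : SimpleGraph (Fin n) where
  Adj i j := i ≠ j ∧ (P.le i j ∨ P.le j i)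
  symm := by
    constructor
    intro i j h
    exact ⟨h.1.symm, h.2.symm⟩
  loopless := by
    constructor
    intro i h
    exact h.1 rfl

/-- `J` is an order ideal of the poset `P`. -/
def IsIdeal (P : PartialOrder (Fin n)) (J : Finset (Fin n)) : Prop :=
  ∀ i ∈ J, ∀ j : Fin n, P.le j i → j ∈ J

/-- The Hasse diagram of `J` as a subposet of `P` is a connected graph. -/
def JConn (P : PartialOrder (Fin n)) (J : Finset (Fin n)) : Prop :=
  ((compGraph P).induce (↑J : Set (Fin n))).Connected

/-- `J` is a connected order ideal of `P`. -/
def IsConnIdeal (P : PartialOrder (Fin n)) (J : Finset (Fin n)) : Prop :=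
  IsIdeal P J ∧ JConn P J

/-- The type of connected order ideals of `P` (the vertices of `G_P`). -/
abbrev ConnIdeal (P : PartialOrder (Fin n)) : Type :=
  {J : Finset (Fin n) // IsConnIdeal P J}

instance (P : PartialOrder (Fin n)) : Fintype (ConnIdeal P) := Fintype.ofFinite _

/-- `A` and `B` intersect nontrivially. -/
def Nontriv (A B : Finset (Fin n)) : Prop :=
  (A ∩ B).Nonempty ∧ ¬ A ⊆ B ∧ ¬ B ⊆ A

/-- The graph `G_P` on the connected order ideals of `P`, with two ideals
adjacent iff they intersect nontrivially. -/
def GP (P : PartialOrder (Fin n)) : SimpleGraph (ConnIdeal P) where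
  Adj A B := Nontriv A.1 B.1
  symm := by
    constructor
    intro A B h
    exact ⟨by rw [Finset.inter_comm]; exact h.1, h.2.2, h.2.1⟩
  loopless := by
    constructor
    intro A h
    exact h.2.1 (Finset.Subset.refl _)

instance (P : PartialOrder (Fin n)) : Fintype ((GP P).ConnectedComponent) :=
  Fintype.ofFinite _

instance (P : PartialOrder (Fin n)) : Fintype ((GP P).edgeSet) :=
  Fintype.ofFinite _

/-- `s` is an independent set of the graph `G`. -/
def IsIndep {V : Type*} (G : SimpleGraph V) (s : Finset V) : Prop :=
  ∀ a ∈ s, ∀ b ∈ s, ¬ G.Adj a b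

/-- `s` is a maximum independent set of the graph `G`. -/
def IsMaxIndep {V : Type*} (G : SimpleGraph V) (s : Finset V) : Prop :=
  IsIndep G s ∧ ∀ t : Finset V, IsIndep G t → t.card ≤ s.card

/-- `s` is a maximum independent set of the subgraph of `G` induced on the
vertex set `S` (e.g. on a connected component of `G`). -/
def IsMaxIndepOn {V : Type*} (G : SimpleGraph V) (S : Set V) (s : Finset V) : Prop :=
  ↑s ⊆ S ∧ IsIndep G s ∧ ∀ t : Finset V, ↑t ⊆ S → IsIndep G t → t.card ≤ s.card

/-- `μ(M, J) = ⋃_{J' ∈ M, J' ⊊ J} J'`. -/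
def mu (P : PartialOrder (Fin n)) (M : Finset (ConnIdeal P)) (J : Finset (Fin n)) :
    Finset (Fin n) :=
  (M.filter (fun J' => J'.1 ⊂ J)).biUnion (fun J' => J'.1)

/-- The strict order relation of the poset `F_M` associated with a maximum
independent set `M` of `G_P`: `i <_{F_M} j` iff `J_a ⊊ J_b` where `J_a, J_b ∈ M`
satisfy `J_a \ μ(M,J_a) = {i}` and `J_b \ μ(M,J_b) = {j}`. -/
def FMlt (P : PartialOrder (Fin n)) (M : Finset (ConnIdeal P)) (i j : Fin n) : Prop :=
  ∃ Ja ∈ M, ∃ Jb ∈ M,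
    Ja.1 \ mu P M Ja.1 = {i} ∧ Jb.1 \ mu P M Jb.1 = {j} ∧ Ja.1 ⊂ Jb.1

/-- The order relation of the poset `F_M`. -/
def FMle (P : PartialOrder (Fin n)) (M : Finset (ConnIdeal P)) (i j : Fin n) : Prop :=
  i = j ∨ FMlt P M i j

/-- Strict relation associated with the relation `le`. -/
def ltRel (le : Fin n → Fin n → Prop) (i j : Fin n) : Prop := le i j ∧ i ≠ j

/-- `j` covers `i` in the order given by the relation `le`. -/
def CovRel (le : Fin n → Fin n → Prop) (i j : Fin n) : Prop :=
  ltRel le i j ∧ ∀ k : Fin n, ltRel le i k → ¬ ltRel le k j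

/-- The principal order ideal `Λ_i = {j : j ≤ i}` of the order given by `le`. -/
def LamRel (le : Fin n → Fin n → Prop) (i : Fin n) : Finset (Fin n) :=
  Finset.univ.filter (fun j => le j i)

/-- The descent set of a forest order given by the relation `le`:
elements `i` whose parent (the element covering `i`) is smaller than `i`. -/
def DesRel (le : Fin n → Fin n → Prop) : Finset (Fin n) :=
  Finset.univ.filter (fun i => ∃ j : Fin n, CovRel le i j ∧ j < i)

/-- `Des(M) = Des(F_M)`. -/
def DesM (P : PartialOrder (Fin n)) (M : Finset (ConnIdeal P)) : Finset (Fin n) :=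
  DesRel (FMle P M)

/-- `Des(M_r, M)`. -/
def DesMr (P : PartialOrder (Fin n)) (Mr M : Finset (ConnIdeal P)) : Finset (Fin n) :=
  (DesM P M).filter (fun i => ∃ J ∈ Mr, J.1 \ mu P M J.1 = {i})

/-- `Des̄(M_r, M)`. -/
def DesBarMr (P : PartialOrder (Fin n)) (Mr M : Finset (ConnIdeal P)) :
    Finset (ConnIdeal P) :=
  Mr.filter (fun J => ∃ i ∈ DesMr P Mr M, J.1 \ mu P M J.1 = {i})

/-- The relation `le` is (the order relation of) a `P`-forest: a partial order
whose Hasse diagram is a forest, all of whose principal order ideals are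
connected order ideals of `P`, and such that for incomparable `i, j` the union
`Λ_i ∪ Λ_j` is a disconnected order ideal of `P`. -/
structure IsPForestRel (P : PartialOrder (Fin n)) (le : Fin n → Fin n → Prop) : Prop where
  refl : ∀ i, le i i
  trans : ∀ i j k, le i j → le j k → le i k
  antisymm : ∀ i j, le i j → le j i → i = j
  forest : ∀ i j k, CovRel le i j → CovRel le i k → j = k
  connIdeal : ∀ i, IsConnIdeal P (LamRel le i)
  disc : ∀ i j : Fin n, ¬ le i j → ¬ le j i →
    IsIdeal P (LamRel le i ∪ LamRel le j) ∧ ¬ JConn P (LamRel le i ∪ LamRel le j)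

/-- The principal order ideal `Λ_i^P` of `P`. -/
def PIdeal (P : PartialOrder (Fin n)) (i : Fin n) : Finset (Fin n) :=
  Finset.univ.filter (fun k => P.le k i)

/-- The generating set `gs(J)`: the maximal elements of `J` with respect to `P`. -/
def gsJ (P : PartialOrder (Fin n)) (J : Finset (Fin n)) : Finset (Fin n) :=
  J.filter (fun i => ∀ j ∈ J, ¬ P.lt i j)

/-- `P` is naturally labeled. -/
def NatLabeled (P : PartialOrder (Fin n)) : Prop :=
  ∀ i j : Fin n, P.lt i j → i < j

/-- `U_max(M, J)`: the maximal members of `U(M,J) = {J' ∈ M : J' ⊊ J}`. -/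
def Umax (P : PartialOrder (Fin n)) (M : Finset (ConnIdeal P)) (J : Finset (Fin n)) :
    Finset (ConnIdeal P) :=
  (M.filter (fun Ja => Ja.1 ⊂ J)).filter
    (fun Ja => ∀ Jb ∈ M, Jb.1 ⊂ J → Jb ≠ Ja → ¬ Ja.1 ⊂ Jb.1)

/-- The set of vertices of `G_P` which are principal order ideals of `P`. -/
def PIdealSet (P : PartialOrder (Fin n)) : Set (ConnIdeal P) :=
  {A : ConnIdeal P | ∃ i : Fin n, A.1 = PIdeal P i}

/-- The graph `H_P`: the subgraph of `G_P` induced by the principal order ideals. -/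
def HP (P : PartialOrder (Fin n)) : SimpleGraph (PIdealSet P) :=
  (GP P).induce (PIdealSet P)

/-- `f` is a `P`-partition. -/
def IsPPartition (P : PartialOrder (Fin n)) (f : Fin n → ℕ) : Prop :=
  (∀ i j : Fin n, P.lt i j → f j ≤ f i) ∧
  (∀ i j : Fin n, P.lt i j → j < i → f j < f i)

/-- The monomial `∏_{k ∈ J} x_k`. -/
def xJ (J : Finset (Fin n)) : MvPowerSeries (Fin n) ℚ :=
  ∏ k ∈ J, MvPowerSeries.X k

/-- The set of linear extensions of `P`, viewed as permutations `w` of `Fin n`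
(in positions `0, …, n-1`) such that `i < j` whenever `w i <_P w j`. -/
def LinExts (P : PartialOrder (Fin n)) : Finset (Equiv.Perm (Fin n)) :=
  Finset.univ.filter (fun w => ∀ i j : Fin n, P.lt (w i) (w j) → i < j)

/-- The major index of a permutation (with 1-indexed positions). -/
def maj (w : Equiv.Perm (Fin n)) : ℕ :=
  ∑ i ∈ Finset.univ.filter
      (fun i : Fin n => ∃ h : (i : ℕ) + 1 < n, w ⟨(i : ℕ) + 1, h⟩ < w i),
    ((i : ℕ) + 1)

/-- The finset of maximum independent sets of the connected component `c` of `G_P`. -/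
def MaxIndepsOn (P : PartialOrder (Fin n)) (c : (GP P).ConnectedComponent) :
    Finset (Finset (ConnIdeal P)) :=
  Finset.univ.filter (fun Mr : Finset (ConnIdeal P) => IsMaxIndepOn (GP P) c.supp Mr)

/-!
An independent set of `G_P` is a laminar family, and a maximum one contains every connected order
ideal that meets none of its members nontrivially. For `j ∈ J ∈ M` the connected ideal
`Λ_j ∪ ⋃ {K ∈ M : K ⊊ J, K ∩ Λ_j ≠ ∅}` is of this kind, so it lies in `M`; if `j ∉ μ(M,J)` it can
only be `J` itself, which puts every element of `J \ μ(M,J)` below `j`. That `J \ μ(M,J)` is nonempty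
comes from the connectivity of `J`: a largest member of `M` strictly inside `J ⊆ μ(M,J)` would be
closed under comparability within `J`.
-/

section Graph

variable {V : Type*} {G : SimpleGraph V}

lemma IsMaxIndep.mem_of_forall_not_adj {s : Finset V} (hs : IsMaxIndep G s) {v : V}
    (hv : ∀ a ∈ s, ¬ G.Adj v a) : v ∈ s := by
  by_contra hvs
  have hindep : IsIndep G (insert v s) := by
    intro a ha b hb hab
    rw [Finset.mem_insert] at ha hb
    rcases ha with rfl | ha <;> rcases hb with rfl | hb
    · exact G.irrefl hab
    · exact hv b hb hab
    · exact hv a ha hab.symm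
    · exact hs.1 a ha b hb hab
  have hcard := hs.2 _ hindep
  rw [Finset.card_insert_of_notMem hvs] at hcard
  omega

lemma subset_of_induce_connected_of_adj_closed {J S : Set V} (hJ : (G.induce J).Connected)
    (hSJ : (S ∩ J).Nonempty) (hS : ∀ a ∈ S, ∀ b ∈ J, G.Adj a b → b ∈ S) : J ⊆ S := by
  obtain ⟨a, haS, haJ⟩ := hSJ
  intro b hbJ
  by_contra hbS
  obtain ⟨d, -, hd_fst, hd_snd⟩ := (hJ.preconnected ⟨a, haJ⟩ ⟨b, hbJ⟩).some.exists_boundary_dart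
    {v | (v : V) ∈ S} haS hbS
  exact hd_snd (hS _ hd_fst _ d.snd.2 d.adj)

end Graph

section Poset

variable {P : PartialOrder (Fin n)} {M : Finset (ConnIdeal P)}

lemma mem_PIdeal {i j : Fin n} : i ∈ PIdeal P j ↔ P.le i j := by
  simp [PIdeal]

lemma mem_mu {J : Finset (Fin n)} {x : Fin n} :
    x ∈ mu P M J ↔ ∃ K ∈ M, K.1 ⊂ J ∧ x ∈ K.1 := by
  simp only [mu, Finset.mem_biUnion, Finset.mem_filter, and_assoc]

lemma mu_subset (J : Finset (Fin n)) : mu P M J ⊆ J := fun _ hx =>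
  let ⟨_, _, hKJ, hxK⟩ := mem_mu.1 hx
  hKJ.subset hxK

lemma isIdeal_mu (J : Finset (Fin n)) : IsIdeal P (mu P M J) := by
  intro x hx y hyx
  obtain ⟨K, hKM, hKJ, hxK⟩ := mem_mu.1 hx
  exact mem_mu.2 ⟨K, hKM, hKJ, K.2.1 x hxK y hyx⟩

lemma IsIndep.subset_or_subset (hM : IsIndep (GP P) M) {A B : ConnIdeal P} (hA : A ∈ M)
    (hB : B ∈ M) (hAB : (A.1 ∩ B.1).Nonempty) : A.1 ⊆ B.1 ∨ B.1 ⊆ A.1 := by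
  by_contra h
  rw [not_or] at h
  exact hM A hA B hB ⟨hAB, h.1, h.2⟩

lemma isConnIdeal_PIdeal (j : Fin n) : IsConnIdeal P (PIdeal P j) := by
  refine ⟨fun x hx y hyx => mem_PIdeal.2 (P.le_trans _ _ _ hyx (mem_PIdeal.1 hx)), ?_⟩
  rw [JConn, SimpleGraph.connected_iff_exists_forall_reachable]
  refine ⟨⟨j, mem_PIdeal.2 (P.le_refl j)⟩, fun ⟨x, hx⟩ => ?_⟩
  by_cases hxj : x = j
  · subst hxj; rfl
  · exact SimpleGraph.Adj.reachable
      (show (compGraph P).Adj j x from ⟨Ne.symm hxj, Or.inr (mem_PIdeal.1 hx)⟩)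

lemma IsConnIdeal.union_biUnion {K : Finset (Fin n)} (hK : IsConnIdeal P K)
    (F : Finset (ConnIdeal P)) (hF : ∀ A ∈ F, (A.1 ∩ K).Nonempty) :
    IsConnIdeal P (K ∪ F.biUnion Subtype.val) := by
  constructor
  · intro x hx y hyx
    simp only [Finset.mem_union, Finset.mem_biUnion] at hx ⊢
    rcases hx with hx | ⟨A, hA, hxA⟩
    · exact Or.inl (hK.1 x hx y hyx)
    · exact Or.inr ⟨A, hA, A.2.1 x hxA y hyx⟩
  · obtain ⟨⟨u, hu⟩⟩ := hK.2.nonempty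
    rw [JConn, Finset.coe_union, Finset.coe_biUnion]
    refine SimpleGraph.induce_connected_of_patches u (Or.inl hu) fun {v} hv => ?_
    simp only [Set.mem_union, Set.mem_iUnion, Finset.mem_coe, exists_prop] at hv
    rcases hv with hv | ⟨A, hA, hvA⟩
    · exact ⟨K, Set.subset_union_left, hu, hv, hK.2.preconnected _ _⟩
    · have hA_sub : (A.1 : Set (Fin n)) ⊆ ⋃ B ∈ F, (B.1 : Set (Fin n)) :=
        Set.subset_biUnion_of_mem (u := fun B : ConnIdeal P => (B.1 : Set (Fin n))) hA
      refine ⟨K ∪ A.1, Set.union_subset_union_right _ hA_sub, Or.inl hu, Or.inr hvA, ?_⟩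
      refine (SimpleGraph.induce_union_connected hK.2.preconnected A.2.2.preconnected
        ?_).preconnected _ _
      rw [← Finset.coe_inter, Finset.coe_nonempty, Finset.inter_comm]
      exact hF A hA

lemma exists_mem_subset_PIdeal_union_mu (hM : IsMaxIndep (GP P) M) {J : ConnIdeal P}
    (hJ : J ∈ M) {j : Fin n} (hj : j ∈ J.1) :
    ∃ I ∈ M, j ∈ I.1 ∧ I.1 ⊆ J.1 ∧ I.1 ⊆ PIdeal P j ∪ mu P M J.1 := by
  set F := M.filter (fun K => K.1 ⊂ J.1 ∧ (K.1 ∩ PIdeal P j).Nonempty)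
  have hF_mu : F.biUnion Subtype.val ⊆ mu P M J.1 := by
    intro x hx
    obtain ⟨K, hKF, hxK⟩ := Finset.mem_biUnion.1 hx
    obtain ⟨hKM, hKJ, -⟩ := Finset.mem_filter.1 hKF
    exact mem_mu.2 ⟨K, hKM, hKJ, hxK⟩
  let I : ConnIdeal P := ⟨PIdeal P j ∪ F.biUnion Subtype.val,
    (isConnIdeal_PIdeal j).union_biUnion F fun K hK => (Finset.mem_filter.1 hK).2.2⟩
  have hIJ : I.1 ⊆ J.1 := Finset.union_subset (fun x hx => J.2.1 j hj x (mem_PIdeal.1 hx))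
    (hF_mu.trans (mu_subset J.1))
  have hlaminar : ∀ A ∈ M, (I.1 ∩ A.1).Nonempty → I.1 ⊆ A.1 ∨ A.1 ⊆ I.1 := by
    rintro A hA ⟨x, hx⟩
    obtain ⟨hxI, hxA⟩ := Finset.mem_inter.1 hx
    rcases hM.1.subset_or_subset hA hJ ⟨x, Finset.mem_inter.2 ⟨hxA, hIJ hxI⟩⟩ with hAJ | hJA
    · by_cases hAJ_eq : A.1 = J.1
      · exact Or.inl (hAJ_eq ▸ hIJ)
      right
      have hF_sub : ∀ K ∈ F, K.1 ⊆ I.1 := fun K hK =>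
        (Finset.subset_biUnion_of_mem Subtype.val hK).trans Finset.subset_union_right
      have hA_of_meet : (A.1 ∩ PIdeal P j).Nonempty → A.1 ⊆ I.1 := fun h =>
        hF_sub A (Finset.mem_filter.2 ⟨hA, hAJ.ssubset_of_ne hAJ_eq, h⟩)
      rcases Finset.mem_union.1 hxI with hxj | hxF
      · exact hA_of_meet ⟨x, Finset.mem_inter.2 ⟨hxA, hxj⟩⟩
      obtain ⟨K, hKF, hxK⟩ := Finset.mem_biUnion.1 hxF
      obtain ⟨hKM, -, hKj⟩ := Finset.mem_filter.1 hKF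
      rcases hM.1.subset_or_subset hA hKM ⟨x, Finset.mem_inter.2 ⟨hxA, hxK⟩⟩ with hAK | hKA
      · exact hAK.trans (hF_sub K hKF)
      · exact hA_of_meet (hKj.mono (Finset.inter_subset_inter_right hKA))
    · exact Or.inl (hIJ.trans hJA)
  have hIM : I ∈ M := hM.mem_of_forall_not_adj fun A hA hadj =>
    (hlaminar A hA hadj.1).elim hadj.2.1 hadj.2.2
  exact ⟨I, hIM, Finset.mem_union_left _ (mem_PIdeal.2 (P.le_refl j)), hIJ,
    Finset.union_subset_union_right hF_mu⟩

lemma sdiff_mu_nonempty (hM : IsIndep (GP P) M) {J : Finset (Fin n)} (hJ : JConn P J) :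
    (J \ mu P M J).Nonempty := by
  by_contra hempty
  have hJ_mu : J ⊆ mu P M J := by
    rwa [Finset.not_nonempty_iff_eq_empty, Finset.sdiff_eq_empty_iff_subset] at hempty
  obtain ⟨⟨x, hx⟩⟩ := hJ.nonempty
  obtain ⟨K₀, hK₀M, hK₀J, -⟩ := mem_mu.1 (hJ_mu hx)
  obtain ⟨K, hKU, hKmax⟩ := (M.filter (·.1 ⊂ J)).exists_max_image (·.1.card)
    ⟨K₀, Finset.mem_filter.2 ⟨hK₀M, hK₀J⟩⟩
  obtain ⟨hKM, hKJ⟩ := Finset.mem_filter.1 hKU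
  have hclosed : ∀ a ∈ (K.1 : Set (Fin n)), ∀ b ∈ (J : Set (Fin n)),
      (compGraph P).Adj a b → b ∈ (K.1 : Set (Fin n)) := by
    rintro a ha b hb ⟨-, hab | hba⟩
    · obtain ⟨K', hK'M, hK'J, hbK'⟩ := mem_mu.1 (hJ_mu hb)
      rcases hM.subset_or_subset hKM hK'M
          ⟨a, Finset.mem_inter.2 ⟨ha, K'.2.1 b hbK' a hab⟩⟩ with hKK' | hK'K
      · rwa [Finset.eq_of_subset_of_card_le hKK' (hKmax K' (Finset.mem_filter.2 ⟨hK'M, hK'J⟩))]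
      · exact hK'K hbK'
    · exact K.2.1 a ha b hba
  obtain ⟨⟨y, hy⟩⟩ := K.2.2.nonempty
  exact hKJ.not_superset
    (subset_of_induce_connected_of_adj_closed hJ ⟨y, hy, hKJ.subset hy⟩ hclosed)

lemma le_of_mem_sdiff_mu (hM : IsMaxIndep (GP P) M) {J : ConnIdeal P} (hJ : J ∈ M)
    {j k : Fin n} (hj : j ∈ J.1 \ mu P M J.1) (hk : k ∈ J.1 \ mu P M J.1) : P.le k j := by
  obtain ⟨hjJ, hj_mu⟩ := Finset.mem_sdiff.1 hj
  obtain ⟨hkJ, hk_mu⟩ := Finset.mem_sdiff.1 hk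
  obtain ⟨I, hIM, hjI, hIJ, hI_sub⟩ := exists_mem_subset_PIdeal_union_mu hM hJ hjJ
  have hIJ_eq : I.1 = J.1 := by
    by_contra hne
    exact hj_mu (mem_mu.2 ⟨I, hIM, hIJ.ssubset_of_ne hne, hjI⟩)
  rcases Finset.mem_union.1 (hI_sub (hIJ_eq ▸ hkJ)) with hkj | hk_mu'
  · exact mem_PIdeal.1 hkj
  · exact absurd hk_mu' hk_mu

lemma exists_sdiff_mu_eq_singleton (hM : IsMaxIndep (GP P) M) {J : ConnIdeal P} (hJ : J ∈ M) :
    ∃ j, J.1 \ mu P M J.1 = {j} := by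
  obtain ⟨j, hj⟩ := sdiff_mu_nonempty hM.1 J.2.2
  exact ⟨j, Finset.eq_singleton_iff_unique_mem.2 ⟨hj, fun k hk =>
    P.le_antisymm _ _ (le_of_mem_sdiff_mu hM hJ hj hk) (le_of_mem_sdiff_mu hM hJ hk hj)⟩⟩

lemma mem_sdiff_mu_of_le {J : Finset (Fin n)} {j k : Fin n} (hj : j ∈ J \ mu P M J) (hk : k ∈ J)
    (hjk : P.le j k) : k ∈ J \ mu P M J :=
  Finset.mem_sdiff.2 ⟨hk, fun hk_mu => (Finset.mem_sdiff.1 hj).2 (isIdeal_mu J k hk_mu j hjk)⟩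

lemma eq_of_mem_sdiff_mu (hM : IsIndep (GP P) M) {A B : ConnIdeal P} (hA : A ∈ M) (hB : B ∈ M)
    {x : Fin n} (hxA : x ∈ A.1 \ mu P M A.1) (hxB : x ∈ B.1 \ mu P M B.1) : A = B := by
  obtain ⟨hxA, hxA_mu⟩ := Finset.mem_sdiff.1 hxA
  obtain ⟨hxB, hxB_mu⟩ := Finset.mem_sdiff.1 hxB
  by_contra hAB
  have hne : A.1 ≠ B.1 := fun h => hAB (Subtype.ext h)
  rcases hM.subset_or_subset hA hB ⟨x, Finset.mem_inter.2 ⟨hxA, hxB⟩⟩ with hAB' | hBA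
  · exact hxB_mu (mem_mu.2 ⟨A, hA, hAB'.ssubset_of_ne hne, hxA⟩)
  · exact hxA_mu (mem_mu.2 ⟨B, hB, hBA.ssubset_of_ne hne.symm, hxB⟩)

end Poset

/-- Lemma 2.3: for a maximum independent set `M` of `G_P` and
`J ∈ M`, there is a unique `j` with `J \ μ(M,J) = {j}`; this `j` is a maximal
element of `J` with respect to `≤_P`, and distinct members of `M` have distinct
sets `J \ μ(M,J)`. -/
theorem statement_6 (n : ℕ) (P : PartialOrder (Fin n))
    (M : Finset (ConnIdeal P)) (hM : IsMaxIndep (GP P) M)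
    (J : ConnIdeal P) (hJ : J ∈ M) :
    (∃! j : Fin n, J.1 \ mu P M J.1 = {j}) ∧
    (∀ j : Fin n, J.1 \ mu P M J.1 = {j} → j ∈ J.1 ∧ ∀ k ∈ J.1, ¬ P.lt j k) ∧
    (∀ Jr ∈ M, ∀ Js ∈ M, Jr ≠ Js →
      Jr.1 \ mu P M Jr.1 ≠ Js.1 \ mu P M Js.1) := by
  obtain ⟨j, hj⟩ := exists_sdiff_mu_eq_singleton hM hJ
  refine ⟨⟨j, hj, fun j' hj' => Finset.singleton_injective (hj'.symm.trans hj)⟩, ?_, ?_⟩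
  · intro j' hj'
    have hj'_mem : j' ∈ J.1 \ mu P M J.1 := hj' ▸ Finset.mem_singleton_self j'
    refine ⟨(Finset.mem_sdiff.1 hj'_mem).1, fun k hk hlt => ?_⟩
    obtain ⟨hle, hnge⟩ := (P.lt_iff_le_not_ge j' k).1 hlt
    have hk_mem := mem_sdiff_mu_of_le hj'_mem hk hle
    rw [hj', Finset.mem_singleton] at hk_mem
    subst hk_mem
    exact hnge hle
  · intro Jr hJr Js hJs hne heq
    obtain ⟨jr, hjr⟩ := exists_sdiff_mu_eq_singleton hM hJr
    have hjr_mem : jr ∈ Jr.1 \ mu P M Jr.1 := hjr ▸ Finset.mem_singleton_self jr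
    exact hne (eq_of_mem_sdiff_mu hM.1 hJr hJs hjr_mem (heq ▸ hjr_mem))
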